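/- Let V be a finite set and let F : 2^V → ℝ be a monotone nondecreasing submodular set function with F(∅) = 0. Fix n ≥ 1 and let P_0 = ∅ and, for i = 1, …, n, let P_i = P_{i−1} ∪ {v_i} where v_i ∈ V \ P_{i−1} maximizes the marginal gain, i.e. F(P_{i−1} ∪ {v_i}) − F(P_{i−1}) ≥ F(P_{i−1} ∪ {v}) − F(P_{i−1}) for every v ∈ V \ P_{i−1} (assume |V| ≥ n so such elements exist). Then the greedy solution satisfies F(P_n) ≥ (1 − 1/e) · max{ F(S) : S ⊆ V, |S| ≤ n }. -/

import Mathlib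

/-! Greedy gains shrink the gap `F S - F (P i)` to the optimum by a factor `1 - 1/n` per step:
by submodularity the elements of `S` missing from `P i` together add at most the sum of their
marginal gains, each of which is at most the greedy gain, and there are at most `n` of them.
After `n` steps the gap is at most `(1 - 1/n)^n F S ≤ F S / e`. -/

/-- A set function `F` on subsets of a finite ground set is submodular if for all
subsets `R ⊆ P` and every element `v ∉ P`,
`F (P ∪ {v}) - F P ≤ F (R ∪ {v}) - F R`. -/
def Submodular {V : Type*} [DecidableEq V] (F : Finset V → ℝ) : Prop :=
  ∀ R P : Finset V, R ⊆ P → ∀ v : V, v ∉ P →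
    F (insert v P) - F P ≤ F (insert v R) - F R

namespace Submodular

variable {V : Type*} [DecidableEq V] {F : Finset V → ℝ}

theorem sub_le_sum_marginal (hsub : Submodular F) (A T : Finset V) (hdisj : Disjoint T A) :
    F (A ∪ T) - F A ≤ ∑ u ∈ T, (F (insert u A) - F A) := by
  induction T using Finset.induction_on with
  | empty => simp
  | @insert a T haT ih =>
    rw [Finset.disjoint_insert_left] at hdisj
    have hgain : F (insert a (A ∪ T)) - F (A ∪ T) ≤ F (insert a A) - F A :=
      hsub A (A ∪ T) Finset.subset_union_left a (by simp [hdisj.1, haT])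
    rw [Finset.union_insert, Finset.sum_insert haT]
    linarith [ih hdisj.2]

theorem sub_le_card_mul_greedy_gain (hsub : Submodular F) (hmono : Monotone F)
    {A : Finset V} {w : V}
    (hgreedy : ∀ u ∉ A, F (insert u A) - F A ≤ F (insert w A) - F A) (S : Finset V) :
    F S - F A ≤ S.card * (F (insert w A) - F A) := by
  have hgain_nonneg : 0 ≤ F (insert w A) - F A :=
    sub_nonneg.mpr (hmono (Finset.subset_insert w A))
  calc F S - F A ≤ F (A ∪ (S \ A)) - F A := by
        gcongr
        exact hmono (by simp)
    _ ≤ ∑ u ∈ S \ A, (F (insert u A) - F A) :=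
        hsub.sub_le_sum_marginal A _ Finset.sdiff_disjoint
    _ ≤ ∑ _u ∈ S \ A, (F (insert w A) - F A) :=
        Finset.sum_le_sum fun u hu => hgreedy u (Finset.mem_sdiff.mp hu).2
    _ = (S \ A).card * (F (insert w A) - F A) := by rw [Finset.sum_const, nsmul_eq_mul]
    _ ≤ S.card * (F (insert w A) - F A) := by
        gcongr
        exact Finset.sdiff_subset

theorem greedy_gap_le (hsub : Submodular F) (hmono : Monotone F)
    {A : Finset V} {w : V}
    (hgreedy : ∀ u ∉ A, F (insert u A) - F A ≤ F (insert w A) - F A)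
    {S : Finset V} {k : ℕ} (hS : S.card ≤ k) :
    F S - F (insert w A) ≤ (1 - 1 / (k : ℝ)) * (F S - F A) := by
  have hbound := hsub.sub_le_card_mul_greedy_gain hmono hgreedy S
  have hgain_nonneg : 0 ≤ F (insert w A) - F A :=
    sub_nonneg.mpr (hmono (Finset.subset_insert w A))
  rcases Nat.eq_zero_or_pos k with rfl | hk
  · -- `1 / 0 = 0`, so for `k = 0` the claim is just monotonicity.
    simp only [Nat.cast_zero, div_zero, sub_zero, one_mul]
    linarith
  · have hk' : (0 : ℝ) < k := by exact_mod_cast hk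
    have hcard : (S.card : ℝ) ≤ k := by exact_mod_cast hS
    have hgap_div : (F S - F A) / k ≤ F (insert w A) - F A := by
      rw [div_le_iff₀ hk', mul_comm]
      exact hbound.trans (mul_le_mul_of_nonneg_right hcard hgain_nonneg)
    rw [sub_mul, one_mul, one_div_mul_eq_div]
    linarith

end Submodular

theorem one_sub_one_div_pow_le_exp_neg_one {n : ℕ} (hn : 1 ≤ n) :
    (1 - 1 / (n : ℝ)) ^ n ≤ 1 / Real.exp 1 := by
  rw [one_div (Real.exp 1), ← Real.exp_neg]
  exact Real.one_sub_div_pow_le_exp_neg (by exact_mod_cast hn)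

theorem greedy_submodular_approx_general {V : Type*} [DecidableEq V]
    (F : Finset V → ℝ)
    (hmono : ∀ R P : Finset V, R ⊆ P → F R ≤ F P)
    (hsub : Submodular F)
    (hempty : F ∅ = 0)
    (n : ℕ) (hn : 1 ≤ n)
    (P : ℕ → Finset V) (v : ℕ → V)
    (hP0 : P 0 = ∅)
    (hstep : ∀ i < n, P (i + 1) = insert (v i) (P i))
    (hgreedy : ∀ i < n, ∀ u : V, u ∉ P i →
      F (insert u (P i)) - F (P i) ≤ F (insert (v i) (P i)) - F (P i)) :
    ∀ S : Finset V, S.card ≤ n →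
      (1 - 1 / Real.exp 1) * F S ≤ F (P n) := by
  intro S hS
  have hmono' : Monotone F := fun R P h => hmono R P h
  have hcontract : ∀ i < n, F S - F (P (i + 1)) ≤ (1 - 1 / (n : ℝ)) * (F S - F (P i)) := by
    intro i hi
    rw [hstep i hi]
    exact hsub.greedy_gap_le hmono' (hgreedy i hi) hS
  have hfactor_nonneg : 0 ≤ 1 - 1 / (n : ℝ) := by
    rw [sub_nonneg]
    exact div_le_one_of_le₀ (by exact_mod_cast hn) (Nat.cast_nonneg n)
  have hgap := le_geom (u := fun i => F S - F (P i)) hfactor_nonneg n hcontract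
  have hFS_nonneg : 0 ≤ F S := hempty ▸ hmono ∅ S (Finset.empty_subset S)
  simp only [hP0, hempty, sub_zero] at hgap
  linarith [mul_le_mul_of_nonneg_right (one_sub_one_div_pow_le_exp_neg_one hn) hFS_nonneg]

/-- The greedy algorithm for maximizing a monotone nondecreasing submodular set
function `F` with `F ∅ = 0` under a cardinality constraint `n` achieves at
least a `(1 - 1/e)` fraction of the optimum: if `P 0 = ∅` and at each step
`i < n` the element `v i ∉ P i` of maximal marginal gain is added, then
`F (P n) ≥ (1 - 1/e) * F S` for every `S ⊆ V` with `|S| ≤ n`. -/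
theorem greedy_submodular_approx {V : Type*} [Fintype V] [DecidableEq V]
    (F : Finset V → ℝ)
    (hmono : ∀ R P : Finset V, R ⊆ P → F R ≤ F P)
    (hsub : Submodular F)
    (hempty : F ∅ = 0)
    (n : ℕ) (hn : 1 ≤ n) (hcard : n ≤ Fintype.card V)
    (P : ℕ → Finset V) (v : ℕ → V)
    (hP0 : P 0 = ∅)
    (hvmem : ∀ i < n, v i ∉ P i)
    (hstep : ∀ i < n, P (i + 1) = insert (v i) (P i))
    (hgreedy : ∀ i < n, ∀ u : V, u ∉ P i →
      F (insert u (P i)) - F (P i) ≤ F (insert (v i) (P i)) - F (P i)) :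
    ∀ S : Finset V, S.card ≤ n →
      (1 - 1 / Real.exp 1) * F S ≤ F (P n) :=
  greedy_submodular_approx_general F hmono hsub hempty n hn P v hP0 hstep hgreedy
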